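/- For every natural number $n$, the identity of polynomials $x^n = \sum_{k=0}^{n} \Big( 2^{-2n}\,(2(n-k)+1)\, n! \sum_{0 \leq v \leq k,\; k-v \text{ even}} \frac{2^{v}}{(\tfrac{3}{2})_{\,n - (v+k)/2}\; v!\; ((k-v)/2)!} \Big) P_{n-k}(2x-1)$ holds in $\mathbb{R}[x]$. -/

import Mathlib

/-!
Write `x = ((2x - 1) + 1) / 2` and expand `x ^ n` binomially in `t = 2x - 1`. Each power has
the classical expansion `t ^ j = ∑_l (2(j - 2l) + 1) j! / (2^j l! (3/2)_{j-l}) P_{j-2l}(t)`,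
which follows by induction on `j` from Bonnet's recurrence
`(2m + 1) t P_m = (m + 1) P_{m+1} + m P_{m-1}`; the recurrence itself is a comparison of the
explicit coefficients of `P_m`. The coefficient of `P_{n-k}(2x - 1)` then collects the pairs
`(j, l)` with `v = n - j` and `k = v + 2l`.
-/

open Polynomial Finset

/-- The Legendre polynomial
`P_n(x) = 2^{-n} ∑_{k=0}^{⌊n/2⌋} (-1)^k C(n,k) C(2n-2k,n) x^{n-2k}`. -/
noncomputable def legendreP (n : ℕ) : ℝ[X] :=
  ∑ k ∈ range (n / 2 + 1),
    C ((2 : ℝ) ^ (-(n : ℤ)) * (-1 : ℝ) ^ k * (n.choose k : ℝ) *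
       ((2 * n - 2 * k).choose n : ℝ)) * X ^ (n - 2 * k)

open scoped Nat

noncomputable def legendreCoeff (n k : ℕ) : ℝ :=
  (2 : ℝ) ^ (-(n : ℤ)) * (-1 : ℝ) ^ k * (n.choose k : ℝ) * ((2 * n - 2 * k).choose n : ℝ)

lemma legendreCoeff_eq_zero {n k : ℕ} (h : n < 2 * k) : legendreCoeff n k = 0 := by
  rcases lt_or_ge n k with hk | hk
  · simp [legendreCoeff, Nat.choose_eq_zero_of_lt hk]
  · simp [legendreCoeff, Nat.choose_eq_zero_of_lt (show 2 * n - 2 * k < n by omega)]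

lemma legendreP_eq_sum {n N : ℕ} (h : n / 2 < N) :
    legendreP n = ∑ k ∈ range N, C (legendreCoeff n k) * X ^ (n - 2 * k) := by
  change ∑ k ∈ range (n / 2 + 1), C (legendreCoeff n k) * X ^ (n - 2 * k) = _
  refine sum_subset (range_subset_range.2 (by omega)) fun k _ hk => ?_
  rw [mem_range, not_lt] at hk
  simp [legendreCoeff_eq_zero (n := n) (k := k) (by omega)]

lemma legendreCoeff_two_mul_add (k r : ℕ) :
    legendreCoeff (2 * k + r) k =
      (-1) ^ k * (2 * k + 2 * r)! / (2 ^ (2 * k + r) * k ! * (k + r)! * r !) := by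
  rw [legendreCoeff, zpow_neg, zpow_natCast,
    show 2 * (2 * k + r) - 2 * k = 2 * k + 2 * r by omega,
    Nat.cast_choose ℝ (show k ≤ 2 * k + r by omega),
    Nat.cast_choose ℝ (show 2 * k + r ≤ 2 * k + 2 * r by omega),
    show 2 * k + r - k = k + r by omega, show 2 * k + 2 * r - (2 * k + r) = r by omega]
  field_simp

lemma legendreCoeff_add_two_zero (m : ℕ) :
    (m + 2 : ℝ) * legendreCoeff (m + 2) 0 = (2 * m + 3) * legendreCoeff (m + 1) 0 := by
  have h := legendreCoeff_two_mul_add 0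
  simp only [mul_zero, zero_add] at h
  rw [h, h]
  simp only [show 2 * (m + 2) = 2 * m + 2 + 2 by ring, show 2 * (m + 1) = 2 * m + 2 by ring,
    Nat.factorial_succ]
  push_cast
  field_simp
  ring

lemma legendreCoeff_add_two_succ (m k : ℕ) :
    (m + 2 : ℝ) * legendreCoeff (m + 2) (k + 1) + (m + 1) * legendreCoeff m k =
      (2 * m + 3) * legendreCoeff (m + 1) (k + 1) := by
  rcases lt_or_ge (m + 1) (2 * k + 2) with hm | hm
  · rcases eq_or_lt_of_le (show m ≤ 2 * k by omega) with rfl | hm'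
    · have h := legendreCoeff_two_mul_add (r := 0)
      simp only [add_zero, mul_zero] at h
      rw [legendreCoeff_eq_zero (n := 2 * k + 1) (k := k + 1) (by omega),
        show 2 * k + 2 = 2 * (k + 1) by ring, h, h]
      simp only [show 2 * (k + 1) = 2 * k + 2 by ring, Nat.factorial_succ]
      push_cast
      field_simp
      ring
    · simp [legendreCoeff_eq_zero (n := m) (k := k) (by omega),
        legendreCoeff_eq_zero (n := m + 1) (k := k + 1) (by omega),
        legendreCoeff_eq_zero (n := m + 2) (k := k + 1) (by omega)]
  · obtain ⟨r, rfl⟩ : ∃ r, m = 2 * k + r + 1 := ⟨m - (2 * k + 1), by omega⟩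
    rw [show 2 * k + r + 1 + 2 = 2 * (k + 1) + (r + 1) by ring,
      show 2 * k + r + 1 + 1 = 2 * (k + 1) + r by ring,
      show 2 * k + r + 1 = 2 * k + (r + 1) by ring]
    simp only [legendreCoeff_two_mul_add,
      show 2 * (k + 1) + 2 * (r + 1) = 2 * k + 2 * r + 2 + 2 by ring,
      show 2 * k + 2 * (r + 1) = 2 * k + 2 * r + 2 by ring,
      show 2 * (k + 1) + 2 * r = 2 * k + 2 * r + 2 by ring,
      show k + 1 + (r + 1) = k + r + 1 + 1 by ring, show k + 1 + r = k + r + 1 by ring,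
      show k + (r + 1) = k + r + 1 by ring, Nat.factorial_succ]
    push_cast
    field_simp
    ring

lemma legendreP_add_two (m : ℕ) :
    C ((m : ℝ) + 2) * legendreP (m + 2) + C ((m : ℝ) + 1) * legendreP m =
      C (2 * (m : ℝ) + 3) * (X * legendreP (m + 1)) := by
  have head : C ((m : ℝ) + 2) * (C (legendreCoeff (m + 2) 0) * X ^ (m + 2 - 2 * 0)) =
      C (2 * (m : ℝ) + 3) * (X * (C (legendreCoeff (m + 1) 0) * X ^ (m + 1 - 2 * 0))) := by
    rw [← mul_assoc, ← C_mul, legendreCoeff_add_two_zero, C_mul, mul_zero, Nat.sub_zero,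
      Nat.sub_zero]
    ring
  have tail (k : ℕ) :
      C ((m : ℝ) + 2) * (C (legendreCoeff (m + 2) (k + 1)) * X ^ (m + 2 - 2 * (k + 1))) +
        C ((m : ℝ) + 1) * (C (legendreCoeff m k) * X ^ (m - 2 * k)) =
      C (2 * (m : ℝ) + 3) *
        (X * (C (legendreCoeff (m + 1) (k + 1)) * X ^ (m + 1 - 2 * (k + 1)))) := by
    rcases lt_or_ge (m + 1) (2 * k + 2) with hm | hm
    · have h := legendreCoeff_add_two_succ m k
      rw [legendreCoeff_eq_zero (n := m + 1) (k := k + 1) (by omega), mul_zero] at h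
      rw [legendreCoeff_eq_zero (n := m + 1) (k := k + 1) (by omega),
        show m + 2 - 2 * (k + 1) = m - 2 * k by omega, ← mul_assoc, ← mul_assoc, ← add_mul,
        ← C_mul, ← C_mul, ← C_add, h]
      simp
    · rw [show m + 2 - 2 * (k + 1) = m - 2 * k by omega, ← mul_assoc, ← mul_assoc, ← add_mul,
        ← C_mul, ← C_mul, ← C_add, legendreCoeff_add_two_succ, C_mul,
        show m - 2 * k = m + 1 - 2 * (k + 1) + 1 by omega, pow_succ]
      ring
  rw [legendreP_eq_sum (N := m + 2) (by omega),
    legendreP_eq_sum (n := m + 1) (N := m + 2) (by omega),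
    legendreP_eq_sum (n := m) (N := m + 1) (by omega),
    sum_range_succ' _ (m + 1), sum_range_succ' _ (m + 1), mul_add, mul_add, mul_add,
    mul_sum, mul_sum, mul_sum, mul_sum, add_right_comm, ← sum_add_distrib, head]
  simp only [tail]

lemma legendreP_zero : legendreP 0 = 1 := by
  simp [legendreP]

lemma legendreP_one : legendreP 1 = X := by
  simp [legendreP, ← C_ofNat, ← C_mul]

lemma X_mul_legendreP (m : ℕ) :
    X * legendreP m = C (((m : ℝ) + 1) / (2 * m + 1)) * legendreP (m + 1) +
      C ((m : ℝ) / (2 * m + 1)) * legendreP (m - 1) := by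
  rcases m with _ | m
  · simp [legendreP_zero, legendreP_one]
  · have hb : C (2 * (m : ℝ) + 3)⁻¹ * C (2 * (m : ℝ) + 3) = 1 := by
      rw [← C_mul, inv_mul_cancel₀ (by positivity), C_1]
    push_cast
    rw [show ((m : ℝ) + 1 + 1) / (2 * (m + 1) + 1) = (2 * (m : ℝ) + 3)⁻¹ * (m + 2) by ring,
      show ((m : ℝ) + 1) / (2 * (m + 1) + 1) = (2 * (m : ℝ) + 3)⁻¹ * (m + 1) by ring, C_mul, C_mul]
    linear_combination (-C (2 * (m : ℝ) + 3)⁻¹) * legendreP_add_two m - X * legendreP (m + 1) * hb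

-- Zero beyond `l = j / 2`, so that the expansion of `X ^ j` may sum over any longer range.
noncomputable def powLegendreCoeff (j l : ℕ) : ℝ :=
  if 2 * l ≤ j then
    (2 * ((j - 2 * l : ℕ) : ℝ) + 1) * j ! / (2 ^ j * l ! * (ascPochhammer ℝ (j - l)).eval (3 / 2))
  else 0

lemma powLegendreCoeff_eq_zero {j l : ℕ} (h : j < 2 * l) : powLegendreCoeff j l = 0 :=
  if_neg (by omega)

lemma ascPochhammer_eval_three_halves_ne_zero (n : ℕ) :
    (ascPochhammer ℝ n).eval (3 / 2) ≠ 0 :=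
  (ascPochhammer_pos n _ (by norm_num)).ne'

lemma powLegendreCoeff_succ_zero (j : ℕ) :
    powLegendreCoeff (j + 1) 0 = powLegendreCoeff j 0 * ((j + 1) / (2 * j + 1)) := by
  have := ascPochhammer_eval_three_halves_ne_zero j
  simp only [powLegendreCoeff, mul_zero, zero_le, if_true, Nat.sub_zero, Nat.factorial_zero,
    ascPochhammer_succ_eval, Nat.factorial_succ, pow_succ]
  push_cast
  field_simp
  ring

lemma powLegendreCoeff_succ_succ (j l : ℕ) :
    powLegendreCoeff (j + 1) (l + 1) =
      powLegendreCoeff j (l + 1) *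
          ((((j - 2 * (l + 1) : ℕ) : ℝ) + 1) / (2 * ((j - 2 * (l + 1) : ℕ) : ℝ) + 1)) +
        powLegendreCoeff j l * (((j - 2 * l : ℕ) : ℝ) / (2 * ((j - 2 * l : ℕ) : ℝ) + 1)) := by
  rcases lt_or_ge j (2 * l + 2) with hj | hj
  · rcases eq_or_lt_of_le (show j ≤ 2 * l + 1 by omega) with rfl | hj'
    · have := ascPochhammer_eval_three_halves_ne_zero l
      simp only [powLegendreCoeff, if_pos (show 2 * (l + 1) ≤ 2 * l + 1 + 1 by omega),
        if_neg (show ¬ 2 * (l + 1) ≤ 2 * l + 1 by omega), if_pos (show 2 * l ≤ 2 * l + 1 by omega),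
        show 2 * l + 1 + 1 - 2 * (l + 1) = 0 by omega, show 2 * l + 1 - 2 * l = 1 by omega,
        show 2 * l + 1 + 1 - (l + 1) = l + 1 by omega, show 2 * l + 1 - l = l + 1 by omega,
        ascPochhammer_succ_eval, Nat.factorial_succ, pow_succ]
      push_cast
      field_simp
      ring
    · rw [powLegendreCoeff_eq_zero (j := j + 1) (l := l + 1) (by omega),
        powLegendreCoeff_eq_zero (j := j) (l := l + 1) (by omega)]
      rcases eq_or_lt_of_le (show j ≤ 2 * l by omega) with rfl | h
      · simp
      · simp [powLegendreCoeff_eq_zero h]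
  · obtain ⟨m, rfl⟩ : ∃ m, j = m + 2 * l + 2 := ⟨j - (2 * l + 2), by omega⟩
    have := ascPochhammer_eval_three_halves_ne_zero (m + l + 1)
    simp only [powLegendreCoeff, if_pos (show 2 * (l + 1) ≤ m + 2 * l + 2 + 1 by omega),
      if_pos (show 2 * (l + 1) ≤ m + 2 * l + 2 by omega),
      if_pos (show 2 * l ≤ m + 2 * l + 2 by omega),
      show m + 2 * l + 2 + 1 - 2 * (l + 1) = m + 1 by omega,
      show m + 2 * l + 2 - 2 * (l + 1) = m by omega, show m + 2 * l + 2 - 2 * l = m + 2 by omega,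
      show m + 2 * l + 2 + 1 - (l + 1) = m + l + 1 + 1 by omega,
      show m + 2 * l + 2 - (l + 1) = m + l + 1 by omega,
      show m + 2 * l + 2 - l = m + l + 1 + 1 by omega,
      ascPochhammer_succ_eval, Nat.factorial_succ, pow_succ]
    push_cast
    field_simp
    ring

lemma X_pow_eq_sum_range_legendreP (j : ℕ) :
    (X : ℝ[X]) ^ j = ∑ l ∈ range (j + 1), C (powLegendreCoeff j l) * legendreP (j - 2 * l) := by
  induction j with
  | zero => simp [powLegendreCoeff, legendreP_zero]
  | succ j ih =>
    set A : ℕ → ℝ[X] := fun l => C (powLegendreCoeff j l *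
      ((((j - 2 * l : ℕ) : ℝ) + 1) / (2 * ((j - 2 * l : ℕ) : ℝ) + 1))) * legendreP (j + 1 - 2 * l)
    set B : ℕ → ℝ[X] := fun l => C (powLegendreCoeff j l *
      (((j - 2 * l : ℕ) : ℝ) / (2 * ((j - 2 * l : ℕ) : ℝ) + 1))) * legendreP (j + 1 - 2 * (l + 1))
    have step (l : ℕ) : X * (C (powLegendreCoeff j l) * legendreP (j - 2 * l)) = A l + B l := by
      by_cases hl : 2 * l ≤ j
      · rw [mul_left_comm, X_mul_legendreP, show j - 2 * l + 1 = j + 1 - 2 * l by omega,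
          show j - 2 * l - 1 = j + 1 - 2 * (l + 1) by omega]
        simp only [A, B, C_mul]
        ring
      · simp [A, B, powLegendreCoeff_eq_zero (j := j) (l := l) (by omega)]
    have hA : A (j + 1) = 0 := by
      simp [A, powLegendreCoeff_eq_zero (j := j) (l := j + 1) (by omega)]
    rw [pow_succ', ih, mul_sum, sum_congr rfl fun l _ => step l, sum_add_distrib,
      sum_range_succ' _ (j + 1), powLegendreCoeff_succ_zero]
    simp only [powLegendreCoeff_succ_succ, C_add, add_mul, sum_add_distrib]
    rw [← add_zero (∑ l ∈ range (j + 1), A l), ← hA, ← sum_range_succ, sum_range_succ']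
    exact add_right_comm _ _ _

lemma X_pow_eq_sum_legendreP (j : ℕ) :
    (X : ℝ[X]) ^ j = ∑ l ∈ range (j / 2 + 1), C (powLegendreCoeff j l) * legendreP (j - 2 * l) := by
  rw [X_pow_eq_sum_range_legendreP]
  refine (sum_subset (range_subset_range.2 (by omega)) fun l _ hl => ?_).symm
  rw [mem_range, not_lt] at hl
  simp [powLegendreCoeff_eq_zero (j := j) (l := l) (by omega)]

lemma X_pow_eq_sum_comp_legendreP (n : ℕ) :
    (X : ℝ[X]) ^ n = ∑ j ∈ range (n + 1), ∑ l ∈ range (j / 2 + 1),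
      C ((2 ^ n)⁻¹ * n.choose j * powLegendreCoeff j l) *
        (legendreP (j - 2 * l)).comp (2 * X - 1) := by
  have hX : (X : ℝ[X]) = C 2⁻¹ * ((2 * X - 1) + 1) := by
    rw [sub_add_cancel, ← mul_assoc, ← C_ofNat, ← C_mul, inv_mul_cancel₀ two_ne_zero, C_1, one_mul]
  conv_lhs => rw [hX]
  rw [mul_pow, add_pow, mul_sum]
  refine sum_congr rfl fun j _ => ?_
  rw [← X_pow_comp (p := 2 * X - 1), X_pow_eq_sum_legendreP, Polynomial.sum_comp, one_pow,
    mul_one, sum_mul, mul_sum]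
  refine sum_congr rfl fun l _ => ?_
  simp only [mul_comp, C_comp, ← C_pow, C_mul, ← Polynomial.C_eq_natCast, ← inv_pow]
  ring

lemma choose_mul_powLegendreCoeff {n j l : ℕ} (hj : j ≤ n) (hl : 2 * l ≤ j) :
    (2 ^ n)⁻¹ * n.choose j * powLegendreCoeff j l =
      (2 : ℝ) ^ (-(2 * (n : ℤ))) * (2 * ((n : ℝ) - (n - j + 2 * l : ℕ)) + 1) * n ! *
        (2 ^ (n - j) / ((ascPochhammer ℝ (j - l)).eval (3 / 2) * (n - j)! * l !)) := by
  obtain ⟨v, rfl⟩ : ∃ v, n = j + v := ⟨n - j, by omega⟩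
  have := ascPochhammer_eval_three_halves_ne_zero (j - l)
  rw [powLegendreCoeff, if_pos hl, Nat.cast_choose ℝ hj, show j + v - j = v by omega,
    show -(2 * ((j + v : ℕ) : ℤ)) = -((2 * (j + v) : ℕ) : ℤ) by push_cast; ring, zpow_neg,
    zpow_natCast]
  push_cast [Nat.cast_sub hl]
  field_simp
  ring

theorem monomial_in_shifted_legendre (n : ℕ) :
    (X : ℝ[X]) ^ n =
      ∑ k ∈ range (n + 1),
        C ((2 : ℝ) ^ (-(2 * (n : ℤ))) * (2 * ((n : ℝ) - k) + 1) * n.factorial *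
           ∑ v ∈ (range (k + 1)).filter (fun v => (k - v) % 2 = 0),
             (2 : ℝ) ^ v /
               ((ascPochhammer ℝ (n - (v + k) / 2)).eval (3 / 2 : ℝ) *
                v.factorial * ((k - v) / 2).factorial)) *
        (legendreP (n - k)).comp (2 * X - 1) := by
  simp only [mul_sum, map_sum, sum_mul]
  rw [X_pow_eq_sum_comp_legendreP, sum_sigma', sum_sigma']
  refine sum_nbij' (fun p => ⟨n - p.1 + 2 * p.2, n - p.1⟩) (fun q => ⟨n - q.2, (q.1 - q.2) / 2⟩)
    ?_ ?_ ?_ ?_ ?_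
  iterate 4
    rintro ⟨a, b⟩
    simp only [mem_sigma, mem_range, mem_filter, Sigma.mk.injEq, heq_eq_eq]
    omega
  rintro ⟨j, l⟩ hjl
  simp only [mem_sigma, mem_range] at hjl
  dsimp only
  rw [choose_mul_powLegendreCoeff (by omega) (by omega),
    show n - (n - j + 2 * l) = j - 2 * l by omega,
    show n - (n - j + (n - j + 2 * l)) / 2 = j - l by omega,
    show (n - j + 2 * l - (n - j)) / 2 = l by omega]
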